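/- arXiv:2401.03436 — 11 statements merged into one kernel-verified Lean document; each statement's English description precedes it below -/
import Mathlib

section
/- The set of ST-valid inferences equals the relative product of the set of K3-valid inferences and the set of LP-valid inferences: 𝕊𝕋⁺ = 𝕂₃⁺ | 𝕃ℙ⁺. That is, an inference Γ ⇒ Δ is ST-valid if and only if there exists a single formula φ such that Γ ⇒ {φ} is K3-valid and {φ} ⇒ Δ is LP-valid. -/
/-- Propositional formulas over a countably infinite set of variables,
with constants ⊤, ⊥, λ and connectives ¬, ∨, ∧. -/
inductive Fm : Type
  | var : ℕ → Fm
  | top : Fm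
  | bot : Fm
  | lam : Fm
  | neg : Fm → Fm
  | disj : Fm → Fm → Fm
  | conj : Fm → Fm → Fm
  deriving DecidableEq

/-- A function `v : Var → ℚ` is an SK-valuation if it takes values in {0, 1/2, 1}. -/
def SK (v : ℕ → ℚ) : Prop := ∀ p : ℕ, v p = 0 ∨ v p = 1/2 ∨ v p = 1

/-- Extension of a valuation to all formulas by the Strong Kleene scheme. -/
def eval (v : ℕ → ℚ) : Fm → ℚ
  | .var p => v p
  | .top => 1
  | .bot => 0
  | .lam => 1/2
  | .neg φ => 1 - eval v φ
  | .disj φ ψ => max (eval v φ) (eval v ψ)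
  | .conj φ ψ => min (eval v φ) (eval v ψ)

/-- An inference is a pair of finite sets of formulas. -/
abbrev Inference := Finset Fm × Finset Fm

def K3Valid (Γ Δ : Finset Fm) : Prop :=
  ∀ v : ℕ → ℚ, SK v → (∀ γ ∈ Γ, eval v γ = 1) → ∃ δ ∈ Δ, eval v δ = 1

def LPValid (Γ Δ : Finset Fm) : Prop :=
  ∀ v : ℕ → ℚ, SK v → (∀ γ ∈ Γ, eval v γ ≠ 0) → ∃ δ ∈ Δ, eval v δ ≠ 0

def STValid (Γ Δ : Finset Fm) : Prop :=
  ∀ v : ℕ → ℚ, SK v → (∀ γ ∈ Γ, eval v γ = 1) → ∃ δ ∈ Δ, eval v δ ≠ 0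

def TSValid (Γ Δ : Finset Fm) : Prop :=
  ∀ v : ℕ → ℚ, SK v → (∀ γ ∈ Γ, eval v γ ≠ 0) → ∃ δ ∈ Δ, eval v δ = 1

def K3plus : Set Inference := {I | K3Valid I.1 I.2}
def LPplus : Set Inference := {I | LPValid I.1 I.2}
def STplus : Set Inference := {I | STValid I.1 I.2}
def TSplus : Set Inference := {I | TSValid I.1 I.2}

/-- Relative product: the middle term is a single formula. -/
def RelProd (R S : Set Inference) : Set Inference :=
  {I | ∃ φ : Fm, (I.1, ({φ} : Finset Fm)) ∈ R ∧ (({φ} : Finset Fm), I.2) ∈ S}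

/-- Relative sum: for every single formula, one of the two components holds. -/
def RelSum (R S : Set Inference) : Set Inference :=
  {I | ∀ φ : Fm, (I.1, ({φ} : Finset Fm)) ∈ R ∨ (({φ} : Finset Fm), I.2) ∈ S}

def Fm.vars : Fm → Finset ℕ
  | .var p => {p}
  | .top => ∅
  | .bot => ∅
  | .lam => ∅
  | .neg φ => φ.vars
  | .disj φ ψ => φ.vars ∪ ψ.vars
  | .conj φ ψ => φ.vars ∪ ψ.vars

lemma eval_mem {v : ℕ → ℚ} (hv : SK v) (φ : Fm) :
    eval v φ = 0 ∨ eval v φ = 1/2 ∨ eval v φ = 1 := by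
  induction φ with
  | var p => exact hv p
  | top => simp [eval]
  | bot => simp [eval]
  | lam => simp [eval]
  | neg φ ih => rcases ih with h|h|h <;> simp [eval, h] <;> norm_num
  | disj φ ψ ih1 ih2 =>
      rcases ih1 with h|h|h <;> rcases ih2 with h'|h'|h' <;>
        simp [eval, h, h', max_def] <;> norm_num
  | conj φ ψ ih1 ih2 =>
      rcases ih1 with h|h|h <;> rcases ih2 with h'|h'|h' <;>
        simp [eval, h, h', min_def] <;> norm_num

lemma eval_congr {v w : ℕ → ℚ} (φ : Fm) (h : ∀ p ∈ φ.vars, v p = w p) :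
    eval v φ = eval w φ := by
  induction φ with
  | var p => exact h p (by simp [Fm.vars])
  | top => rfl
  | bot => rfl
  | lam => rfl
  | neg φ ih => simp [eval, ih (fun p hp => h p hp)]
  | disj φ ψ ih1 ih2 =>
      simp [eval, ih1 (fun p hp => h p (by simp [Fm.vars, hp])),
        ih2 (fun p hp => h p (by simp [Fm.vars, hp]))]
  | conj φ ψ ih1 ih2 =>
      simp [eval, ih1 (fun p hp => h p (by simp [Fm.vars, hp])),
        ih2 (fun p hp => h p (by simp [Fm.vars, hp]))]

/-- Information-order monotonicity. -/
lemma eval_mono {v w : ℕ → ℚ} (hv : SK v) (hw : SK w)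
    (h : ∀ p, v p = 1/2 ∨ v p = w p) (φ : Fm) :
    eval v φ = 1/2 ∨ eval v φ = eval w φ := by
  induction φ with
  | var p => exact h p
  | top => right; rfl
  | bot => right; rfl
  | lam => left; rfl
  | neg φ ih => rcases ih with h1|h1 <;> simp [eval, h1] <;> norm_num
  | disj φ ψ ih1 ih2 =>
      rcases ih1 with h1|h1 <;> rcases ih2 with h2|h2 <;>
        rcases eval_mem hw φ with a|a|a <;> rcases eval_mem hw ψ with b|b|b <;>
        simp [eval, h1, h2, a, b, max_def] at * <;> norm_num at * <;> simp_all
  | conj φ ψ ih1 ih2 =>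
      rcases ih1 with h1|h1 <;> rcases ih2 with h2|h2 <;>
        rcases eval_mem hw φ with a|a|a <;> rcases eval_mem hw ψ with b|b|b <;>
        simp [eval, h1, h2, a, b, min_def] at * <;> norm_num at * <;> simp_all

def listDisj (l : List Fm) : Fm := l.foldr .disj .bot
def listConj (l : List Fm) : Fm := l.foldr .conj .top

lemma eval_le_one {v : ℕ → ℚ} (hv : SK v) (φ : Fm) : eval v φ ≤ 1 := by
  rcases eval_mem hv φ with h|h|h <;> rw [h] <;> norm_num

lemma eval_nonneg {v : ℕ → ℚ} (hv : SK v) (φ : Fm) : 0 ≤ eval v φ := by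
  rcases eval_mem hv φ with h|h|h <;> rw [h] <;> norm_num

lemma eval_listDisj_eq_one {v : ℕ → ℚ} (hv : SK v) {l : List Fm} {φ : Fm}
    (hφ : φ ∈ l) (h1 : eval v φ = 1) : eval v (listDisj l) = 1 := by
  induction l with
  | nil => simp at hφ
  | cons a l ih =>
      rcases List.mem_cons.mp hφ with rfl | hφ
      · show max (eval v φ) (eval v (listDisj l)) = 1
        rw [h1]; exact max_eq_left (eval_le_one hv _)
      · show max (eval v a) (eval v (listDisj l)) = 1
        rw [ih hφ]; exact max_eq_right (eval_le_one hv _)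

lemma eval_listDisj_ne_zero {v : ℕ → ℚ} {l : List Fm}
    (h : eval v (listDisj l) ≠ 0) : ∃ φ ∈ l, eval v φ ≠ 0 := by
  induction l with
  | nil => exact absurd rfl h
  | cons a l ih =>
      by_cases ha : eval v a = 0
      · have : eval v (listDisj l) ≠ 0 := by
          intro h0
          exact h (by show max (eval v a) (eval v (listDisj l)) = 0; rw [ha, h0]; simp)
        obtain ⟨φ, hφ, hφ0⟩ := ih this
        exact ⟨φ, List.mem_cons_of_mem _ hφ, hφ0⟩
      · exact ⟨a, List.mem_cons_self, ha⟩

lemma eval_listConj_eq_one {v : ℕ → ℚ} {l : List Fm}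
    (h : ∀ φ ∈ l, eval v φ = 1) : eval v (listConj l) = 1 := by
  induction l with
  | nil => rfl
  | cons a l ih =>
      show min (eval v a) (eval v (listConj l)) = 1
      rw [h a List.mem_cons_self, ih (fun φ hφ => h φ (List.mem_cons_of_mem _ hφ))]
      simp

lemma eval_listConj_ne_zero {v : ℕ → ℚ} (hv : SK v) {l : List Fm}
    (h : eval v (listConj l) ≠ 0) : ∀ φ ∈ l, eval v φ ≠ 0 := by
  induction l with
  | nil => simp
  | cons a l ih =>
      have hm : min (eval v a) (eval v (listConj l)) ≠ 0 := h
      have ha : eval v a ≠ 0 := by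
        intro h0
        apply hm
        exact le_antisymm (h0 ▸ min_le_left _ _) (le_min (h0 ▸ le_refl _) (eval_nonneg hv _))
      have hl : eval v (listConj l) ≠ 0 := by
        intro h0
        apply hm
        exact le_antisymm (h0 ▸ min_le_right _ _) (le_min (eval_nonneg hv _) (h0 ▸ le_refl _))
      intro φ hφ
      rcases List.mem_cons.mp hφ with rfl | hφ
      · exact ha
      · exact ih hl φ hφ

noncomputable def minterm (P N : Finset ℕ) : Fm :=
  listConj (P.toList.map Fm.var ++ N.toList.map (fun p => Fm.neg (Fm.var p)))

def vPN (P N : Finset ℕ) : ℕ → ℚ :=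
  fun p => if p ∈ P then 1 else if p ∈ N then 0 else 1/2

lemma SK_vPN (P N : Finset ℕ) : SK (vPN P N) := by
  intro p; unfold vPN; split_ifs <;> simp

def goodPairs (Γ Δ : Finset Fm) : Finset (Finset ℕ × Finset ℕ) :=
  (((Γ ∪ Δ).biUnion Fm.vars).powerset ×ˢ ((Γ ∪ Δ).biUnion Fm.vars).powerset).filter
    (fun PN => ∀ γ ∈ Γ, eval (vPN PN.1 PN.2) γ = 1)

noncomputable def itp (Γ Δ : Finset Fm) : Fm :=
  listDisj ((goodPairs Γ Δ).toList.map (fun PN => minterm PN.1 PN.2))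

lemma itp_K3 (Γ Δ : Finset Fm) : ∀ v : ℕ → ℚ, SK v →
    (∀ γ ∈ Γ, eval v γ = 1) → eval v (itp Γ Δ) = 1 := by
  intro v hv hΓ
  set V := (Γ ∪ Δ).biUnion Fm.vars with hV
  set P := V.filter (fun p => v p = 1) with hP
  set N := V.filter (fun p => v p = 0) with hN
  have hagree : ∀ p ∈ V, vPN P N p = v p := by
    intro p hp
    unfold vPN
    rcases hv p with h|h|h
    · rw [if_neg, if_pos] <;> simp [hP, hN, hp, h] <;> norm_num
    · rw [if_neg, if_neg] <;> simp [hP, hN, hp, h] <;> norm_num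
    · rw [if_pos] <;> simp [hP, hN, hp, h]
  have hmem : (P, N) ∈ goodPairs Γ Δ := by
    refine Finset.mem_filter.mpr ⟨Finset.mem_product.mpr ⟨?_, ?_⟩, ?_⟩
    · exact Finset.mem_powerset.mpr (Finset.filter_subset _ _)
    · exact Finset.mem_powerset.mpr (Finset.filter_subset _ _)
    · intro γ hγ
      have hsub : γ.vars ⊆ V := fun p hp =>
        Finset.mem_biUnion.mpr ⟨γ, Finset.mem_union_left _ hγ, hp⟩
      rw [eval_congr γ (fun p hp => hagree p (hsub hp))]
      exact hΓ γ hγ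
  apply eval_listDisj_eq_one hv
    (List.mem_map.mpr ⟨(P, N), Finset.mem_toList.mpr hmem, rfl⟩)
  apply eval_listConj_eq_one
  intro φ hφ
  rcases List.mem_append.mp hφ with h|h
  · obtain ⟨p, hp, rfl⟩ := List.mem_map.mp h
    have := (Finset.mem_filter.mp (Finset.mem_toList.mp hp)).2
    simpa [eval] using this
  · obtain ⟨p, hp, rfl⟩ := List.mem_map.mp h
    have := (Finset.mem_filter.mp (Finset.mem_toList.mp hp)).2
    simp [eval, this]

lemma itp_LP (Γ Δ : Finset Fm) (hST : STValid Γ Δ) : ∀ v : ℕ → ℚ, SK v →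
    eval v (itp Γ Δ) ≠ 0 → ∃ δ ∈ Δ, eval v δ ≠ 0 := by
  intro v hv hne
  obtain ⟨ψ, hψmem, hψne⟩ := eval_listDisj_ne_zero hne
  obtain ⟨⟨P, N⟩, hPN, rfl⟩ := List.mem_map.mp hψmem
  have hPN := Finset.mem_filter.mp (Finset.mem_toList.mp hPN)
  have hΓ1 : ∀ γ ∈ Γ, eval (vPN P N) γ = 1 := hPN.2
  have hconj := eval_listConj_ne_zero hv hψne
  have hPv : ∀ p ∈ P, v p ≠ 0 := by
    intro p hp
    have := hconj (Fm.var p)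
      (List.mem_append_left _ (List.mem_map.mpr ⟨p, Finset.mem_toList.mpr hp, rfl⟩))
    simpa [eval] using this
  have hNv : ∀ p ∈ N, v p ≠ 1 := by
    intro p hp
    have := hconj (Fm.neg (Fm.var p))
      (List.mem_append_right _ (List.mem_map.mpr ⟨p, Finset.mem_toList.mpr hp, rfl⟩))
    simp only [eval, ne_eq, sub_eq_zero] at this
    exact fun h => this h.symm
  set u : ℕ → ℚ := fun p => if p ∈ P then 1 else if p ∈ N then 0 else v p with hu
  have hSKu : SK u := by
    intro p; rw [hu]; dsimp only
    split_ifs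
    · simp
    · simp
    · exact hv p
  have hmono1 : ∀ p, vPN P N p = 1/2 ∨ vPN P N p = u p := by
    intro p; unfold vPN; rw [hu]; dsimp only; split_ifs <;> simp
  have hΓu : ∀ γ ∈ Γ, eval u γ = 1 := by
    intro γ hγ
    rcases eval_mono (SK_vPN P N) hSKu hmono1 γ with h|h
    · rw [hΓ1 γ hγ] at h; norm_num at h
    · rw [← h]; exact hΓ1 γ hγ
  obtain ⟨δ, hδ, hδne⟩ := hST u hSKu hΓu
  have hmono2 : ∀ p, v p = 1/2 ∨ v p = u p := by
    intro p
    rw [hu]; dsimp only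
    by_cases hp : p ∈ P
    · rw [if_pos hp]
      rcases hv p with h|h|h
      · exact absurd h (hPv p hp)
      · exact Or.inl h
      · exact Or.inr h
    · rw [if_neg hp]
      by_cases hn : p ∈ N
      · rw [if_pos hn]
        rcases hv p with h|h|h
        · exact Or.inr h
        · exact Or.inl h
        · exact absurd h (hNv p hn)
      · rw [if_neg hn]; exact Or.inr rfl
  refine ⟨δ, hδ, ?_⟩
  rcases eval_mono hv hSKu hmono2 δ with h|h
  · rw [h]; norm_num
  · rw [h]; exact hδne

theorem ST_eq_relProd_K3_LP : STplus = RelProd K3plus LPplus := by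
  ext ⟨Γ, Δ⟩
  constructor
  · intro hST
    have hST' : STValid Γ Δ := hST
    refine ⟨itp Γ Δ, ?_, ?_⟩
    · intro v hv hΓ
      exact ⟨itp Γ Δ, Finset.mem_singleton_self _, itp_K3 Γ Δ v hv hΓ⟩
    · intro v hv h
      exact itp_LP Γ Δ hST' v hv (h _ (Finset.mem_singleton_self _))
  · rintro ⟨φ, hK3, hLP⟩
    intro v hv hΓ
    obtain ⟨δ, hδ, h1⟩ := hK3 v hv hΓ
    rw [Finset.mem_singleton] at hδ; subst hδ
    refine hLP v hv (fun γ hγ => ?_)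
    rw [Finset.mem_singleton] at hγ; subst hγ
    rw [h1]; norm_num
end

section
/- The union of the sets of K3-valid and LP-valid inferences is strictly included in their relational composition: 𝕂₃⁺ ∪ 𝕃ℙ⁺ ⊊ 𝕂₃⁺ ∘ 𝕃ℙ⁺. In particular, the inference p ∨ (q ∧ ¬q) ⇒ p ∧ (q ∨ ¬q) belongs to 𝕂₃⁺ ∘ 𝕃ℙ⁺ but belongs neither to 𝕂₃⁺ nor to 𝕃ℙ⁺. -/
/-- Relational composition: the middle term is a finite set of formulas. -/
def RelComp (R S : Set Inference) : Set Inference :=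
  {I | ∃ Θ : Finset Fm, (I.1, Θ) ∈ R ∧ (Θ, I.2) ∈ S}

lemma witness_mem :
    (({Fm.disj (.var 0) (.conj (.var 1) (.neg (.var 1)))} : Finset Fm),
     ({Fm.conj (.var 0) (.disj (.var 1) (.neg (.var 1)))} : Finset Fm)) ∈
        RelComp K3plus LPplus := by
  refine ⟨{Fm.var 0}, ?_, ?_⟩
  · intro v hSK h
    refine ⟨Fm.var 0, Finset.mem_singleton_self _, ?_⟩
    have h1 := h _ (Finset.mem_singleton_self _)
    simp only [eval] at h1 ⊢
    rcases hSK 1 with h2 | h2 | h2 <;> rcases hSK 0 with h0 | h0 | h0 <;>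
      (revert h1; norm_num [h0, h2, max_def, min_def])
  · intro v hSK h
    refine ⟨_, Finset.mem_singleton_self _, ?_⟩
    have h1 := h _ (Finset.mem_singleton_self _)
    simp only [eval] at h1 ⊢
    rcases hSK 1 with h2 | h2 | h2 <;> rcases hSK 0 with h0 | h0 | h0 <;>
      (revert h1; norm_num [h0, h2, max_def, min_def])

lemma union_sub : K3plus ∪ LPplus ⊆ RelComp K3plus LPplus := by
  rintro ⟨Γ, Δ⟩ (h | h)
  · refine ⟨Δ ∪ {Fm.bot}, ?_, ?_⟩
    · intro v hSK hΓ
      obtain ⟨δ, hδ, he⟩ := h v hSK hΓ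
      exact ⟨δ, Finset.mem_union_left _ hδ, he⟩
    · intro v _ hΘ
      exact absurd rfl (hΘ Fm.bot (Finset.mem_union_right _ (Finset.mem_singleton_self _)))
  · refine ⟨Γ ∪ {Fm.top}, ?_, ?_⟩
    · intro v _ _
      exact ⟨Fm.top, Finset.mem_union_right _ (Finset.mem_singleton_self _), rfl⟩
    · intro v hSK hΘ
      refine h v hSK (fun γ hγ => hΘ γ (Finset.mem_union_left _ hγ))

theorem union_ssubset_relComp :
    K3plus ∪ LPplus ⊂ RelComp K3plus LPplus ∧
    (({Fm.disj (.var 0) (.conj (.var 1) (.neg (.var 1)))} : Finset Fm),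
     ({Fm.conj (.var 0) (.disj (.var 1) (.neg (.var 1)))} : Finset Fm)) ∈
        RelComp K3plus LPplus ∧
    (({Fm.disj (.var 0) (.conj (.var 1) (.neg (.var 1)))} : Finset Fm),
     ({Fm.conj (.var 0) (.disj (.var 1) (.neg (.var 1)))} : Finset Fm)) ∉ K3plus ∧
    (({Fm.disj (.var 0) (.conj (.var 1) (.neg (.var 1)))} : Finset Fm),
     ({Fm.conj (.var 0) (.disj (.var 1) (.neg (.var 1)))} : Finset Fm)) ∉ LPplus := by
  have hK3 : (({Fm.disj (.var 0) (.conj (.var 1) (.neg (.var 1)))} : Finset Fm),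
     ({Fm.conj (.var 0) (.disj (.var 1) (.neg (.var 1)))} : Finset Fm)) ∉ K3plus := by
    intro h
    obtain ⟨δ, hδ, he⟩ := h (fun n => if n = 0 then 1 else 1/2)
      (by intro p; by_cases hp : p = 0 <;> simp [hp])
      (by intro γ hγ; rw [Finset.mem_singleton] at hγ; subst hγ; norm_num [eval, max_def, min_def])
    rw [Finset.mem_singleton] at hδ; subst hδ
    norm_num [eval, max_def, min_def] at he
  have hLP : (({Fm.disj (.var 0) (.conj (.var 1) (.neg (.var 1)))} : Finset Fm),
     ({Fm.conj (.var 0) (.disj (.var 1) (.neg (.var 1)))} : Finset Fm)) ∉ LPplus := by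
    intro h
    obtain ⟨δ, hδ, he⟩ := h (fun n => if n = 0 then 0 else 1/2)
      (by intro p; by_cases hp : p = 0 <;> simp [hp])
      (by intro γ hγ; rw [Finset.mem_singleton] at hγ; subst hγ; norm_num [eval, max_def, min_def])
    rw [Finset.mem_singleton] at hδ; subst hδ
    norm_num [eval, max_def, min_def] at he
  refine ⟨⟨union_sub, ?_⟩, witness_mem, hK3, hLP⟩
  intro hsub
  rcases hsub witness_mem with h | h
  · exact hK3 h
  · exact hLP h
end

section
/- The set of ST-valid inferences is not equal to the relational composition of the sets of K3-valid and LP-valid inferences: 𝕊𝕋⁺ ≠ 𝕂₃⁺ ∘ 𝕃ℙ⁺. In particular, the inference p ∨ ¬p ⇒ p ∧ ¬p belongs to 𝕂₃⁺ ∘ 𝕃ℙ⁺ (with middle set {p, ¬p}) but is not ST-valid. -/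
/-! A K3-model of `φ ∨ ψ` makes `φ` or `ψ` true, and an LP-model of `φ` and `ψ` makes `φ ∧ ψ`
non-false; so `φ ∨ ψ ⇒ φ ∧ ψ` passes through the middle set `{φ, ψ}`. Under `p ↦ 1`, however,
`p ∨ ¬p` is true while `p ∧ ¬p` is false, so `p ∨ ¬p ⇒ p ∧ ¬p` is not ST-valid. -/

theorem k3Valid_disj_split (φ ψ : Fm) : K3Valid {Fm.disj φ ψ} {φ, ψ} := by
  intro v _ hΓ
  have hdisj : max (eval v φ) (eval v ψ) = 1 := hΓ _ (Finset.mem_singleton_self _)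
  rcases max_choice (eval v φ) (eval v ψ) with h | h
  · exact ⟨φ, by simp, h ▸ hdisj⟩
  · exact ⟨ψ, by simp, h ▸ hdisj⟩

theorem lpValid_conj_intro (φ ψ : Fm) : LPValid {φ, ψ} {Fm.conj φ ψ} := by
  intro v _ hΓ
  refine ⟨_, Finset.mem_singleton_self _, ?_⟩
  change min (eval v φ) (eval v ψ) ≠ 0
  rcases min_choice (eval v φ) (eval v ψ) with h | h <;> rw [h] <;> exact hΓ _ (by simp)

theorem disj_conj_mem_relComp_K3plus_LPplus (φ ψ : Fm) :
    (({Fm.disj φ ψ} : Finset Fm), ({Fm.conj φ ψ} : Finset Fm)) ∈ RelComp K3plus LPplus :=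
  ⟨{φ, ψ}, k3Valid_disj_split φ ψ, lpValid_conj_intro φ ψ⟩

theorem not_stValid_excludedMiddle_contradiction (p : ℕ) :
    ¬ STValid {Fm.disj (.var p) (.neg (.var p))} {Fm.conj (.var p) (.neg (.var p))} := by
  intro hST
  obtain ⟨δ, hδ, hδne⟩ := hST (fun _ => 1) (fun _ => Or.inr (Or.inr rfl))
    (fun γ hγ => by rw [Finset.mem_singleton.mp hγ]; norm_num [eval])
  rw [Finset.mem_singleton.mp hδ] at hδne
  norm_num [eval] at hδne

theorem ST_ne_relComp :
    STplus ≠ RelComp K3plus LPplus ∧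
    (({Fm.disj (.var 0) (.neg (.var 0))} : Finset Fm),
     ({Fm.conj (.var 0) (.neg (.var 0))} : Finset Fm)) ∈ RelComp K3plus LPplus ∧
    ¬ STValid ({Fm.disj (.var 0) (.neg (.var 0))} : Finset Fm)
        ({Fm.conj (.var 0) (.neg (.var 0))} : Finset Fm) := by
  have hmem := disj_conj_mem_relComp_K3plus_LPplus (.var 0) (.neg (.var 0))
  have hST := not_stValid_excludedMiddle_contradiction 0
  exact ⟨fun h => hST (h ▸ hmem : _ ∈ STplus), hmem, hST⟩
end

section
/- Neither 𝕊𝕋⁺ nor 𝕋𝕊⁺ equals the intersection 𝕂₃⁺ ∩ 𝕃ℙ⁺, and neither 𝕊𝕋⁺ nor 𝕋𝕊⁺ equals the union 𝕂₃⁺ ∪ 𝕃ℙ⁺. -/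
-- Witness 1: Γ₀ = {p, ¬p ∨ q}, Δ₀ = {q ∧ λ}.  ST-valid, not K3-valid, not LP-valid.
private def Γ₀ : Finset Fm := {.var 0, .disj (.neg (.var 0)) (.var 1)}
private def Δ₀ : Finset Fm := {.conj (.var 1) .lam}

private lemma hST0 : STValid Γ₀ Δ₀ := by
  intro v hv h
  have h0 : eval v (.var 0) = 1 := h _ (by simp [Γ₀])
  have h1 : eval v (.disj (.neg (.var 0)) (.var 1)) = 1 := h _ (by simp [Γ₀])
  refine ⟨.conj (.var 1) .lam, by simp [Δ₀], ?_⟩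
  simp only [eval] at h0 h1 ⊢
  rw [h0] at h1
  norm_num at h1
  rcases hv 1 with h | h | h <;> rw [h] at h1 ⊢ <;> norm_num at h1 <;> norm_num

private lemma hnK30 : ¬ K3Valid Γ₀ Δ₀ := by
  intro h
  obtain ⟨δ, hδ, hval⟩ := h (fun _ => 1) (fun p => by norm_num)
    (by intro γ hγ; simp [Γ₀] at hγ; rcases hγ with h | h <;> subst h <;> simp [eval])
  simp [Δ₀] at hδ
  subst hδ
  simp [eval] at hval
  norm_num at hval

private lemma hnLP0 : ¬ LPValid Γ₀ Δ₀ := by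
  intro h
  obtain ⟨δ, hδ, hval⟩ := h (fun n => if n = 1 then 0 else 1/2)
    (fun p => by by_cases hp : p = 1 <;> simp [hp])
    (by
      intro γ hγ; simp [Γ₀] at hγ
      rcases hγ with h | h <;> subst h <;> simp [eval] <;> norm_num)
  simp [Δ₀] at hδ
  subst hδ
  simp [eval] at hval

-- Witness 2: {p} ⇒ {p}.  K3-valid, LP-valid, not TS-valid.
private lemma hK3id : K3Valid {.var 0} {.var 0} := by
  intro v hv h
  exact ⟨.var 0, by simp, h _ (by simp)⟩

private lemma hLPid : LPValid {.var 0} {.var 0} := by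
  intro v hv h
  exact ⟨.var 0, by simp, h _ (by simp)⟩

private lemma hnTSid : ¬ TSValid {.var 0} {.var 0} := by
  intro h
  obtain ⟨δ, hδ, hval⟩ := h (fun _ => 1/2) (fun p => by norm_num)
    (by intro γ hγ; simp at hγ; subst hγ; simp [eval])
  simp at hδ
  subst hδ
  simp [eval] at hval

theorem ST_TS_neither_inter_nor_union :
    STplus ≠ K3plus ∩ LPplus ∧ TSplus ≠ K3plus ∩ LPplus ∧
    STplus ≠ K3plus ∪ LPplus ∧ TSplus ≠ K3plus ∪ LPplus := by
  refine ⟨?_, ?_, ?_, ?_⟩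
  · intro h
    have hmem : ((Γ₀, Δ₀) : Inference) ∈ STplus := hST0
    rw [h] at hmem
    exact hnK30 hmem.1
  · intro h
    have hmem : (({.var 0}, {.var 0}) : Inference) ∈ K3plus ∩ LPplus := ⟨hK3id, hLPid⟩
    rw [← h] at hmem
    exact hnTSid hmem
  · intro h
    have hmem : ((Γ₀, Δ₀) : Inference) ∈ STplus := hST0
    rw [h] at hmem
    rcases hmem with hmem | hmem
    · exact hnK30 hmem
    · exact hnLP0 hmem
  · intro h
    have hmem : (({.var 0}, {.var 0}) : Inference) ∈ K3plus ∪ LPplus := Or.inl hK3id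
    rw [← h] at hmem
    exact hnTSid hmem
end

section
/- Let v' be the SK-valuation with v'(p) = 1/2 for every propositional variable p. Then for every formula φ: (i) if there exists an SK-valuation v with v(φ) ≠ 0, then v'(φ) ≠ 0; and (ii) if there exists an SK-valuation v with v(φ) ≠ 1, then v'(φ) ≠ 1. -/
lemma eval_mem_Icc {v : ℕ → ℚ} (hv : ∀ p, v p ∈ Set.Icc 0 1) (φ : Fm) :
    eval v φ ∈ Set.Icc 0 1 := by
  induction φ with
  | var p => exact hv p
  | top | bot | lam => norm_num [eval]
  | neg φ ih => simp only [eval, Set.mem_Icc] at ih ⊢; constructor <;> linarith [ih.1, ih.2]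
  | disj φ ψ ihφ ihψ => exact ⟨le_max_of_le_left ihφ.1, max_le ihφ.2 ihψ.2⟩
  | conj φ ψ ihφ ihψ => exact ⟨le_min ihφ.1 ihψ.1, min_le_of_left_le ihφ.2⟩

lemma SK.mem_Icc {v : ℕ → ℚ} (hv : SK v) (p : ℕ) : v p ∈ Set.Icc 0 1 := by
  rcases hv p with h | h | h <;> norm_num [h]

/- No bounds on `v` are needed: at a variable the hypotheses fail, as 1/2 is neither ≤ 0 nor ≥ 1. -/
lemma eval_extreme_of_eval_half_extreme (v : ℕ → ℚ) (φ : Fm) :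
    (eval (fun _ => 1/2) φ ≤ 0 → eval v φ ≤ 0) ∧
    (1 ≤ eval (fun _ => 1/2) φ → 1 ≤ eval v φ) := by
  induction φ with
  | var p | top | bot | lam => norm_num [eval]
  | neg φ ih =>
    simp only [eval, sub_nonpos, le_sub_self_iff]
    exact ⟨ih.2, ih.1⟩
  | disj φ ψ ihφ ihψ =>
    simp only [eval, max_le_iff, le_max_iff]
    exact ⟨And.imp ihφ.1 ihψ.1, Or.imp ihφ.2 ihψ.2⟩
  | conj φ ψ ihφ ihψ =>
    simp only [eval, min_le_iff, le_min_iff]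
    exact ⟨Or.imp ihφ.1 ihψ.1, And.imp ihφ.2 ihψ.2⟩

theorem half_valuation_extremal (φ : Fm) :
    ((∃ v : ℕ → ℚ, SK v ∧ eval v φ ≠ 0) → eval (fun _ => 1/2) φ ≠ 0) ∧
    ((∃ v : ℕ → ℚ, SK v ∧ eval v φ ≠ 1) → eval (fun _ => 1/2) φ ≠ 1) := by
  constructor
  · rintro ⟨v, hv, hφ⟩ hhalf
    have hle := (eval_extreme_of_eval_half_extreme v φ).1 hhalf.le
    exact hφ (le_antisymm hle (eval_mem_Icc hv.mem_Icc φ).1)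
  · rintro ⟨v, hv, hφ⟩ hhalf
    have hge := (eval_extreme_of_eval_half_extreme v φ).2 hhalf.ge
    exact hφ (le_antisymm (eval_mem_Icc hv.mem_Icc φ).2 hge)
end

section
/- If an inference Γ ⇒ Δ is TS-valid, then either there is some γ ∈ Γ such that v(γ) = 0 for every SK-valuation v, or there is some δ ∈ Δ such that v(δ) = 1 for every SK-valuation v. -/
/-!
Strong Kleene evaluation is monotone in the information order, in which `1/2` lies below the
two classical values. The valuation `v₀` that is constantly `1/2` lies below every SK-valuation,
so a formula taking a classical value under `v₀` takes that value under every SK-valuation.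
Now either some premise is `0` under `v₀`, and then it is unsatisfiable, or TS-validity applied
to `v₀` yields a conclusion that is `1` under `v₀`, and then it is unfalsifiable.
-/

def InfoLE (a b : ℚ) : Prop := a = 1/2 ∨ a = b

namespace InfoLE

variable {a b c d : ℚ}

lemma one_sub (h : InfoLE a b) : InfoLE (1 - a) (1 - b) := by
  rcases h with rfl | rfl
  · left; norm_num
  · right; rfl

lemma max (hab : InfoLE a b) (hcd : InfoLE c d)
    (hb : b ∈ ({0, 1/2, 1} : Set ℚ)) (hd : d ∈ ({0, 1/2, 1} : Set ℚ)) :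
    InfoLE (max a c) (max b d) := by
  simp only [Set.mem_insert_iff, Set.mem_singleton_iff] at hb hd
  rcases hab with rfl | rfl <;> rcases hcd with rfl | rfl <;>
    rcases hb with rfl | rfl | rfl <;> rcases hd with rfl | rfl | rfl <;> norm_num [InfoLE]

lemma min (hab : InfoLE a b) (hcd : InfoLE c d)
    (hb : b ∈ ({0, 1/2, 1} : Set ℚ)) (hd : d ∈ ({0, 1/2, 1} : Set ℚ)) :
    InfoLE (min a c) (min b d) := by
  simp only [Set.mem_insert_iff, Set.mem_singleton_iff] at hb hd
  rcases hab with rfl | rfl <;> rcases hcd with rfl | rfl <;>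
    rcases hb with rfl | rfl | rfl <;> rcases hd with rfl | rfl | rfl <;> norm_num [InfoLE]

end InfoLE

lemma eval_mem_of_SK {v : ℕ → ℚ} (hv : SK v) (φ : Fm) :
    eval v φ ∈ ({0, 1/2, 1} : Set ℚ) := by
  simp only [Set.mem_insert_iff, Set.mem_singleton_iff]
  induction φ with
  | var p => exact hv p
  | top | bot | lam => norm_num [eval]
  | neg φ ih => rcases ih with h | h | h <;> norm_num [eval, h]
  | disj φ ψ ihφ ihψ =>
    rcases ihφ with h₁ | h₁ | h₁ <;> rcases ihψ with h₂ | h₂ | h₂ <;> norm_num [eval, h₁, h₂]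
  | conj φ ψ ihφ ihψ =>
    rcases ihφ with h₁ | h₁ | h₁ <;> rcases ihψ with h₂ | h₂ | h₂ <;> norm_num [eval, h₁, h₂]

lemma eval_infoLE {v w : ℕ → ℚ} (hvw : ∀ p, InfoLE (v p) (w p)) (hw : SK w) (φ : Fm) :
    InfoLE (eval v φ) (eval w φ) := by
  induction φ with
  | var p => exact hvw p
  | top | bot | lam => right; rfl
  | neg φ ih => exact ih.one_sub
  | disj φ ψ ihφ ihψ => exact ihφ.max ihψ (eval_mem_of_SK hw φ) (eval_mem_of_SK hw ψ)
  | conj φ ψ ihφ ihψ => exact ihφ.min ihψ (eval_mem_of_SK hw φ) (eval_mem_of_SK hw ψ)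

lemma eval_eq_eval_half_of_ne_half {v : ℕ → ℚ} (hv : SK v) {φ : Fm}
    (hφ : eval (fun _ => 1/2) φ ≠ 1/2) : eval v φ = eval (fun _ => 1/2) φ :=
  ((eval_infoLE (fun _ => Or.inl rfl) hv φ).resolve_left hφ).symm

lemma SK_const_half : SK fun _ => 1/2 := fun _ => Or.inr (Or.inl rfl)

theorem ts_valid_implies_unsat_or_unfalsifiable (Γ Δ : Finset Fm) (h : TSValid Γ Δ) :
    (∃ γ ∈ Γ, ∀ v : ℕ → ℚ, SK v → eval v γ = 0) ∨
    (∃ δ ∈ Δ, ∀ v : ℕ → ℚ, SK v → eval v δ = 1) := by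
  by_cases hΓ : ∀ γ ∈ Γ, eval (fun _ => 1/2) γ ≠ 0
  · obtain ⟨δ, hδ, hδ_one⟩ := h _ SK_const_half hΓ
    refine Or.inr ⟨δ, hδ, fun v hv => ?_⟩
    rw [eval_eq_eval_half_of_ne_half hv (by rw [hδ_one]; norm_num), hδ_one]
  · push Not at hΓ
    obtain ⟨γ, hγ, hγ_zero⟩ := hΓ
    refine Or.inl ⟨γ, hγ, fun v hv => ?_⟩
    rw [eval_eq_eval_half_of_ne_half hv (by rw [hγ_zero]; norm_num), hγ_zero]
end

section
/- The relative sum of the K3-valid and LP-valid inferences equals the union of the K3-antitheorems with the LP-theorems, which equals the union of the ST-antitheorems with the ST-theorems: 𝕂₃⁺ † 𝕃ℙ⁺ = 𝕂₃ᵃ ∪ 𝕃ℙᵗ = 𝕊𝕋ᵃ ∪ 𝕊𝕋ᵗ. -/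
/-!
The middle formula `λ` is the hardest cut to pass: it is never true and never false, so
`Γ ⇒ λ` is K3-valid exactly when `Γ` is a K3-antitheorem and `λ ⇒ Δ` is LP-valid exactly when
`Δ` is an LP-theorem. Conversely an antitheorem or a theorem survives any weakening, so it yields
every split. With one side empty, ST-validity collapses to K3-validity (empty conclusion) or to
LP-validity (empty premises).
-/

theorem K3Valid.mono {Γ Γ' Δ Δ' : Finset Fm} (h : K3Valid Γ Δ) (hΓ : Γ ⊆ Γ') (hΔ : Δ ⊆ Δ') :
    K3Valid Γ' Δ' := fun v hv hΓ' =>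
  let ⟨δ, hδ, hδv⟩ := h v hv fun γ hγ => hΓ' γ (hΓ hγ)
  ⟨δ, hΔ hδ, hδv⟩

theorem LPValid.mono {Γ Γ' Δ Δ' : Finset Fm} (h : LPValid Γ Δ) (hΓ : Γ ⊆ Γ') (hΔ : Δ ⊆ Δ') :
    LPValid Γ' Δ' := fun v hv hΓ' =>
  let ⟨δ, hδ, hδv⟩ := h v hv fun γ hγ => hΓ' γ (hΓ hγ)
  ⟨δ, hΔ hδ, hδv⟩

theorem k3Valid_lam_iff {Γ : Finset Fm} : K3Valid Γ {Fm.lam} ↔ K3Valid Γ ∅ := by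
  simp [K3Valid, eval]

theorem lpValid_lam_iff {Δ : Finset Fm} : LPValid {Fm.lam} Δ ↔ LPValid ∅ Δ := by
  simp [LPValid, eval]

theorem stValid_empty_right_iff {Γ : Finset Fm} : STValid Γ ∅ ↔ K3Valid Γ ∅ := by
  simp [STValid, K3Valid]

theorem stValid_empty_left_iff {Δ : Finset Fm} : STValid ∅ Δ ↔ LPValid ∅ Δ := by
  simp [STValid, LPValid]

theorem mem_relSum_K3plus_LPplus_iff {I : Inference} :
    I ∈ RelSum K3plus LPplus ↔ K3Valid I.1 ∅ ∨ LPValid ∅ I.2 := by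
  refine ⟨fun h => ?_, fun h φ => ?_⟩
  · exact (h Fm.lam).imp k3Valid_lam_iff.mp lpValid_lam_iff.mp
  · exact h.imp (·.mono subset_rfl (Finset.empty_subset _))
      (·.mono (Finset.empty_subset _) subset_rfl)

theorem relSum_K3_LP_eq :
    RelSum K3plus LPplus =
      ({I : Inference | K3Valid I.1 ∅} ∪ {I : Inference | LPValid ∅ I.2}) ∧
    ({I : Inference | K3Valid I.1 ∅} ∪ {I : Inference | LPValid ∅ I.2}) =
      ({I : Inference | STValid I.1 ∅} ∪ {I : Inference | STValid ∅ I.2}) := by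
  constructor
  · ext I
    exact mem_relSum_K3plus_LPplus_iff
  · ext I
    simp only [Set.mem_union, Set.mem_ofPred_eq, stValid_empty_right_iff, stValid_empty_left_iff]
end

section
/- In the language containing the constant λ, the relative product of the LP-valid inferences and the K3-valid inferences is the set of all inferences: 𝕃ℙ⁺ | 𝕂₃⁺ = {Γ ⇒ Δ : Γ, Δ finite sets of formulas}. In particular, 𝕊𝕋⁺ ≠ 𝕃ℙ⁺ | 𝕂₃⁺. -/
@[simp]
theorem eval_lam (v : ℕ → ℚ) : eval v .lam = 1 / 2 := rfl

theorem lpValid_lam (Γ : Finset Fm) : LPValid Γ {.lam} :=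
  fun v _ _ => ⟨.lam, Finset.mem_singleton_self _, by norm_num⟩

theorem k3Valid_lam (Δ : Finset Fm) : K3Valid {.lam} Δ := by
  intro v _ h
  norm_num at h

theorem not_stValid_empty_bot : ¬ STValid ∅ {.bot} := by
  intro h
  obtain ⟨δ, hδ, hne⟩ := h (fun _ => 0) (fun _ => Or.inl rfl) (by simp)
  rw [Finset.mem_singleton.mp hδ] at hne
  exact hne rfl

theorem relProd_LP_K3_univ :
    RelProd LPplus K3plus = (Set.univ : Set Inference) ∧
    STplus ≠ RelProd LPplus K3plus := by
  have huniv : RelProd LPplus K3plus = Set.univ :=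
    Set.eq_univ_of_forall fun I => ⟨.lam, lpValid_lam I.1, k3Valid_lam I.2⟩
  refine ⟨huniv, fun h => not_stValid_empty_bot ?_⟩
  have hmem : ((∅ : Finset Fm), ({.bot} : Finset Fm)) ∈ STplus := by
    rw [h, huniv]
    trivial
  exact hmem
end

section
/- K3 and LP are operationally dual: for all finite sets of formulas Γ, Δ, the inference Γ ⇒ Δ is K3-valid if and only if ∼(Δ) ⇒ ∼(Γ) is LP-valid, and Γ ⇒ Δ is LP-valid if and only if ∼(Δ) ⇒ ∼(Γ) is K3-valid. -/
/-- The operational-dual map `∼`, interchanging ⊤ with ⊥ and ∧ with ∨. -/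
def opDual : Fm → Fm
  | .var p => .var p
  | .top => .bot
  | .bot => .top
  | .lam => .lam
  | .neg φ => .neg (opDual φ)
  | .conj φ ψ => .disj (opDual φ) (opDual ψ)
  | .disj φ ψ => .conj (opDual φ) (opDual ψ)


/-!
The reflection `v ↦ 1 - v` is a bijection of SK-valuations, and `∼` is exactly the syntactic
counterpart of it: `eval (1 - v) (∼φ) = 1 - eval v φ`. It swaps the values `1` and `0`, so the
contrapositive of a K3-validity becomes LP-validity of the dual inference. Since `∼` is
involutive, the second equivalence is the first one applied to `∼(Δ) ⇒ ∼(Γ)`.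
-/

theorem opDual_opDual (φ : Fm) : opDual (opDual φ) = φ := by
  induction φ <;> simp only [opDual, *]

theorem opDual_involutive : Function.Involutive opDual := opDual_opDual

theorem eval_one_sub_opDual (v : ℕ → ℚ) (φ : Fm) :
    eval (1 - v) (opDual φ) = 1 - eval v φ := by
  induction φ with
  | var p => rfl
  | top | bot | lam => norm_num [opDual, eval]
  | neg φ ih => simp only [opDual, eval, ih]
  | disj φ ψ ihφ ihψ => simp only [opDual, eval, ihφ, ihψ, min_sub_sub_left]
  | conj φ ψ ihφ ihψ => simp only [opDual, eval, ihφ, ihψ, max_sub_sub_left]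

theorem SK.one_sub {v : ℕ → ℚ} (hv : SK v) : SK (1 - v) := by
  intro p
  rcases hv p with h | h | h <;> simp only [Pi.sub_apply, Pi.one_apply, h] <;> norm_num

theorem forall_SK_one_sub {P : (ℕ → ℚ) → Prop} :
    (∀ v, SK v → P (1 - v)) ↔ ∀ v, SK v → P v :=
  ⟨fun h v hv => sub_sub_cancel 1 v ▸ h (1 - v) hv.one_sub, fun h v hv => h (1 - v) hv.one_sub⟩

theorem K3Valid_iff_LPValid_opDual (Γ Δ : Finset Fm) :
    K3Valid Γ Δ ↔ LPValid (Δ.image opDual) (Γ.image opDual) := by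
  rw [LPValid, ← forall_SK_one_sub]
  simp only [K3Valid, Finset.forall_mem_image, Finset.exists_mem_image, eval_one_sub_opDual,
    ne_eq, sub_eq_zero]
  refine forall_congr' fun v => forall_congr' fun _ => ?_
  rw [← not_imp_not]
  simp only [not_forall, not_exists, not_and, eq_comm, exists_prop]

theorem K3_LP_operationally_dual (Γ Δ : Finset Fm) :
    (K3Valid Γ Δ ↔ LPValid (Δ.image opDual) (Γ.image opDual)) ∧
    (LPValid Γ Δ ↔ K3Valid (Δ.image opDual) (Γ.image opDual)) := by
  refine ⟨K3Valid_iff_LPValid_opDual Γ Δ, ?_⟩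
  have h := K3Valid_iff_LPValid_opDual (Δ.image opDual) (Γ.image opDual)
  rwa [Finset.image_image, Finset.image_image, opDual_involutive.comp_self, Finset.image_id,
    Finset.image_id, Iff.comm] at h
end

section
/- ST and TS are operationally self-dual: for all finite sets of formulas Γ, Δ, the inference Γ ⇒ Δ is ST-valid if and only if ∼(Δ) ⇒ ∼(Γ) is ST-valid, and Γ ⇒ Δ is TS-valid if and only if ∼(Δ) ⇒ ∼(Γ) is TS-valid. -/
def SKValidWith (P Q : ℚ → Prop) (Γ Δ : Finset Fm) : Prop :=
  ∀ v : ℕ → ℚ, SK v → (∀ γ ∈ Γ, P (eval v γ)) → ∃ δ ∈ Δ, Q (eval v δ)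

theorem stValid_eq_skValidWith : STValid = SKValidWith (· = 1) (· ≠ 0) := rfl

theorem tsValid_eq_skValidWith : TSValid = SKValidWith (· ≠ 0) (· = 1) := rfl

theorem skValidWith_image_opDual_iff (P Q : ℚ → Prop) (Γ Δ : Finset Fm) :
    SKValidWith P Q (Δ.image opDual) (Γ.image opDual) ↔
      SKValidWith (fun x => ¬Q (1 - x)) (fun x => ¬P (1 - x)) Γ Δ := by
  have hSK : ∀ v : ℕ → ℚ, SK (1 - v) ↔ SK v := fun v =>
    ⟨fun h => sub_sub_cancel (1 : ℕ → ℚ) v ▸ h.one_sub, SK.one_sub⟩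
  simp only [SKValidWith, Finset.forall_mem_image, Finset.exists_mem_image]
  rw [← (Equiv.subLeft (1 : ℕ → ℚ)).forall_congr_right]
  refine forall_congr' fun v => ?_
  simp only [Equiv.subLeft_apply, hSK, eval_one_sub_opDual]
  refine imp_congr_right fun _ => ?_
  rw [← not_imp_not]
  push Not
  rfl

theorem skValidWith_image_opDual_iff_self {P Q : ℚ → Prop} (hPQ : ∀ x, P x ↔ ¬Q (1 - x))
    (Γ Δ : Finset Fm) :
    SKValidWith P Q Γ Δ ↔ SKValidWith P Q (Δ.image opDual) (Γ.image opDual) := by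
  have hQP : ∀ x, Q x ↔ ¬P (1 - x) := fun x => by rw [hPQ, sub_sub_cancel, not_not]
  rw [skValidWith_image_opDual_iff]
  simp only [← hPQ, ← hQP]

theorem ST_TS_operationally_self_dual (Γ Δ : Finset Fm) :
    (STValid Γ Δ ↔ STValid (Δ.image opDual) (Γ.image opDual)) ∧
    (TSValid Γ Δ ↔ TSValid (Δ.image opDual) (Γ.image opDual)) := by
  rw [stValid_eq_skValidWith, tsValid_eq_skValidWith]
  constructor
  · refine skValidWith_image_opDual_iff_self (fun x => ?_) Γ Δ
    rw [not_not, sub_eq_zero, eq_comm]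
  · refine skValidWith_image_opDual_iff_self (fun x => ?_) Γ Δ
    rw [sub_eq_self]
end

section
/- The set of TS-antivalid inferences equals the relative product of the LP-antivalid inferences and the K3-antivalid inferences: 𝕋𝕊⁻ = 𝕃ℙ⁻ | 𝕂₃⁻. That is, an inference Γ ⇒ Δ is TS-antivalid if and only if there exists a formula φ such that Γ ⇒ {φ} is LP-antivalid and {φ} ⇒ Δ is K3-antivalid. -/
def K3Antivalid (Γ Δ : Finset Fm) : Prop :=
  ∀ v : ℕ → ℚ, SK v → (∀ γ ∈ Γ, eval v γ ≠ 1) → ∃ δ ∈ Δ, eval v δ ≠ 1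

def LPAntivalid (Γ Δ : Finset Fm) : Prop :=
  ∀ v : ℕ → ℚ, SK v → (∀ γ ∈ Γ, eval v γ = 0) → ∃ δ ∈ Δ, eval v δ = 0

def STAntivalid (Γ Δ : Finset Fm) : Prop :=
  ∀ v : ℕ → ℚ, SK v → (∀ γ ∈ Γ, eval v γ ≠ 1) → ∃ δ ∈ Δ, eval v δ = 0

def TSAntivalid (Γ Δ : Finset Fm) : Prop :=
  ∀ v : ℕ → ℚ, SK v → (∀ γ ∈ Γ, eval v γ = 0) → ∃ δ ∈ Δ, eval v δ ≠ 1

def K3minus : Set Inference := {I | K3Antivalid I.1 I.2}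
def LPminus : Set Inference := {I | LPAntivalid I.1 I.2}
def STminus : Set Inference := {I | STAntivalid I.1 I.2}
def TSminus : Set Inference := {I | TSAntivalid I.1 I.2}

namespace TSAux

def vars : Fm → Finset ℕ
  | .var p => {p}
  | .top => ∅
  | .bot => ∅
  | .lam => ∅
  | .neg φ => vars φ
  | .disj φ ψ => vars φ ∪ vars ψ
  | .conj φ ψ => vars φ ∪ vars ψ

lemma eval_tri {v : ℕ → ℚ} (hv : SK v) (φ : Fm) :
    eval v φ = 0 ∨ eval v φ = 1/2 ∨ eval v φ = 1 := by
  induction φ with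
  | var p => exact hv p
  | top => simp [eval]
  | bot => simp [eval]
  | lam => simp [eval]
  | neg φ ih => rcases ih with h|h|h <;> simp [eval, h] <;> norm_num
  | disj a b iha ihb =>
      rcases iha with h|h|h <;> rcases ihb with h'|h'|h' <;>
        simp [eval, h, h'] <;> norm_num [max_def]
  | conj a b iha ihb =>
      rcases iha with h|h|h <;> rcases ihb with h'|h'|h' <;>
        simp [eval, h, h'] <;> norm_num [min_def]

lemma eval_nonneg {v : ℕ → ℚ} (hv : SK v) (φ : Fm) : 0 ≤ eval v φ := by
  rcases eval_tri hv φ with h|h|h <;> rw [h] <;> norm_num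

lemma eval_le_one {v : ℕ → ℚ} (hv : SK v) (φ : Fm) : eval v φ ≤ 1 := by
  rcases eval_tri hv φ with h|h|h <;> rw [h] <;> norm_num

lemma eval_congr {v w : ℕ → ℚ} (φ : Fm) (h : ∀ p ∈ vars φ, v p = w p) :
    eval v φ = eval w φ := by
  induction φ with
  | var p => exact h p (by simp [vars])
  | top => rfl
  | bot => rfl
  | lam => rfl
  | neg φ ih => simp only [eval]; rw [ih h]
  | disj a b iha ihb =>
      simp only [eval]
      rw [iha (fun p hp => h p (by simp [vars, hp])),
          ihb (fun p hp => h p (by simp [vars, hp]))]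
  | conj a b iha ihb =>
      simp only [eval]
      rw [iha (fun p hp => h p (by simp [vars, hp])),
          ihb (fun p hp => h p (by simp [vars, hp]))]

lemma eval_mono {v u : ℕ → ℚ} (hv : SK v) (hu : SK u) (φ : Fm)
    (h : ∀ p ∈ vars φ, v p = 1/2 ∨ u p = v p) :
    (eval v φ = 0 → eval u φ = 0) ∧ (eval v φ = 1 → eval u φ = 1) := by
  induction φ with
  | var p =>
      rcases h p (by simp [vars]) with h'|h' <;>
        constructor <;> intro h0 <;> simp [eval] at h0 ⊢ <;>
        first
          | (rw [h'] at h0; norm_num at h0)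
          | (rw [h', h0])
  | top => simp [eval]
  | bot => simp [eval]
  | lam => simp [eval]
  | neg φ ih =>
      obtain ⟨i0, i1⟩ := ih h
      constructor <;> intro h0 <;> simp only [eval] at h0 ⊢
      · rw [i1 (by linarith)]; ring
      · rw [i0 (by linarith)]; ring
  | disj a b iha ihb =>
      obtain ⟨a0, a1⟩ := iha (fun p hp => h p (by simp [vars, hp]))
      obtain ⟨b0, b1⟩ := ihb (fun p hp => h p (by simp [vars, hp]))
      constructor <;> intro h0 <;> simp only [eval] at h0 ⊢
      · have ha : eval v a = 0 := le_antisymm (h0 ▸ le_max_left _ _) (eval_nonneg hv a)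
        have hb : eval v b = 0 := le_antisymm (h0 ▸ le_max_right _ _) (eval_nonneg hv b)
        rw [a0 ha, b0 hb]; simp
      · rcases max_choice (eval v a) (eval v b) with hc|hc <;> rw [hc] at h0
        · rw [a1 h0]; exact max_eq_left (eval_le_one hu b)
        · rw [b1 h0]; exact max_eq_right (eval_le_one hu a)
  | conj a b iha ihb =>
      obtain ⟨a0, a1⟩ := iha (fun p hp => h p (by simp [vars, hp]))
      obtain ⟨b0, b1⟩ := ihb (fun p hp => h p (by simp [vars, hp]))
      constructor <;> intro h0 <;> simp only [eval] at h0 ⊢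
      · rcases min_choice (eval v a) (eval v b) with hc|hc <;> rw [hc] at h0
        · rw [a0 h0]; exact min_eq_left (eval_nonneg hu b)
        · rw [b0 h0]; exact min_eq_right (eval_nonneg hu a)
      · have ha : eval v a = 1 := le_antisymm (eval_le_one hv a) (h0 ▸ min_le_left _ _)
        have hb : eval v b = 1 := le_antisymm (eval_le_one hv b) (h0 ▸ min_le_right _ _)
        rw [a1 ha, b1 hb]; simp

def bigConj : List Fm → Fm := List.foldr .conj .top
def bigDisj : List Fm → Fm := List.foldr .disj .bot

lemma eval_bigConj_eq_one {v : ℕ → ℚ} {L : List Fm} (h : ∀ ψ ∈ L, eval v ψ = 1) :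
    eval v (bigConj L) = 1 := by
  induction L with
  | nil => rfl
  | cons a L ih =>
      show min (eval v a) (eval v (bigConj L)) = 1
      rw [h a (by simp), ih (fun ψ hψ => h ψ (by simp [hψ]))]; simp

lemma bigConj_nonneg {v : ℕ → ℚ} {L : List Fm} (h : ∀ ψ ∈ L, 0 ≤ eval v ψ) :
    0 ≤ eval v (bigConj L) := by
  induction L with
  | nil => norm_num [bigConj, eval]
  | cons a L ih =>
      show 0 ≤ min (eval v a) (eval v (bigConj L))
      exact le_min (h a (by simp)) (ih (fun ψ hψ => h ψ (by simp [hψ])))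

lemma eval_bigConj_eq_zero {v : ℕ → ℚ} {L : List Fm} {ψ : Fm} (hm : ψ ∈ L)
    (h0 : eval v ψ = 0) (hn : ∀ χ ∈ L, 0 ≤ eval v χ) : eval v (bigConj L) = 0 := by
  induction L with
  | nil => cases hm
  | cons a L ih =>
      show min (eval v a) (eval v (bigConj L)) = 0
      rcases List.mem_cons.1 hm with rfl|hm
      · rw [h0]; exact min_eq_left (bigConj_nonneg (fun χ hχ => hn χ (by simp [hχ])))
      · rw [ih hm (fun χ hχ => hn χ (by simp [hχ]))]
        exact min_eq_right (hn a (by simp))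

lemma eval_bigDisj_eq_zero {v : ℕ → ℚ} {L : List Fm} (h : ∀ ψ ∈ L, eval v ψ = 0) :
    eval v (bigDisj L) = 0 := by
  induction L with
  | nil => rfl
  | cons a L ih =>
      show max (eval v a) (eval v (bigDisj L)) = 0
      rw [h a (by simp), ih (fun ψ hψ => h ψ (by simp [hψ]))]; simp

lemma bigDisj_le_one {v : ℕ → ℚ} {L : List Fm} (h : ∀ ψ ∈ L, eval v ψ ≤ 1) :
    eval v (bigDisj L) ≤ 1 := by
  induction L with
  | nil => norm_num [bigDisj, eval]
  | cons a L ih =>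
      show max (eval v a) (eval v (bigDisj L)) ≤ 1
      exact max_le (h a (by simp)) (ih (fun ψ hψ => h ψ (by simp [hψ])))

lemma eval_bigDisj_eq_one {v : ℕ → ℚ} {L : List Fm} {ψ : Fm} (hm : ψ ∈ L)
    (h1 : eval v ψ = 1) (hb : ∀ χ ∈ L, eval v χ ≤ 1) : eval v (bigDisj L) = 1 := by
  induction L with
  | nil => cases hm
  | cons a L ih =>
      show max (eval v a) (eval v (bigDisj L)) = 1
      rcases List.mem_cons.1 hm with rfl|hm
      · rw [h1]; exact max_eq_left (bigDisj_le_one (fun χ hχ => hb χ (by simp [hχ])))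
      · rw [ih hm (fun χ hχ => hb χ (by simp [hχ]))]
        exact max_eq_right (hb a (by simp))

end TSAux

namespace TSAux

lemma fin3_cases (i : Fin 3) : i = 0 ∨ i = 1 ∨ i = 2 := by fin_cases i <;> simp

def toQ : Fin 3 → ℚ := fun i => ((i : ℕ) : ℚ)/2

lemma toQ_tri (i : Fin 3) : toQ i = 0 ∨ toQ i = 1/2 ∨ toQ i = 1 := by
  fin_cases i <;> norm_num [toQ]

def valOf (S : Finset ℕ) (σ : {x // x ∈ S} → Fin 3) : ℕ → ℚ :=
  fun p => if h : p ∈ S then toQ (σ ⟨p, h⟩) else 0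

lemma SK_valOf (S : Finset ℕ) (σ : {x // x ∈ S} → Fin 3) : SK (valOf S σ) := by
  intro p
  by_cases h : p ∈ S
  · simp only [valOf, dif_pos h]; exact toQ_tri _
  · simp [valOf, h]

lemma valOf_mem (S : Finset ℕ) (σ : {x // x ∈ S} → Fin 3) {p : ℕ} (h : p ∈ S) :
    valOf S σ p = toQ (σ ⟨p, h⟩) := dif_pos h

def lit (i : Fin 3) (p : ℕ) : Fm :=
  if i = 0 then .neg (.var p) else if i = 2 then .var p else .top

noncomputable def Dform (S : Finset ℕ) (σ : {x // x ∈ S} → Fin 3) : Fm :=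
  bigConj (S.attach.toList.map fun p => lit (σ p) p.1)

lemma eval_Dform_one {S : Finset ℕ} {v : ℕ → ℚ} {σ : {x // x ∈ S} → Fin 3}
    (h : ∀ (p : ℕ) (hp : p ∈ S), v p = toQ (σ ⟨p, hp⟩)) :
    eval v (Dform S σ) = 1 := by
  apply eval_bigConj_eq_one
  intro ψ hψ
  obtain ⟨p, hp, rfl⟩ := List.mem_map.1 hψ
  have hvp : v p.1 = toQ (σ p) := h p.1 p.2
  rcases fin3_cases (σ p) with h3|h3|h3 <;> rw [h3] at hvp ⊢ <;>
    norm_num [toQ] at hvp <;> simp [lit, eval, hvp]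

lemma eval_Dform_zero {S : Finset ℕ} {v : ℕ → ℚ} {σ : {x // x ∈ S} → Fin 3}
    (hv : SK v) {p : ℕ} (hp : p ∈ S)
    (h1 : v p ≠ 1/2) (h2 : toQ (σ ⟨p, hp⟩) ≠ 1/2) (h3 : v p ≠ toQ (σ ⟨p, hp⟩)) :
    eval v (Dform S σ) = 0 := by
  apply eval_bigConj_eq_zero (ψ := lit (σ ⟨p, hp⟩) p)
  · exact List.mem_map.2 ⟨⟨p, hp⟩, Finset.mem_toList.2 (Finset.mem_attach _ _), rfl⟩
  · rcases fin3_cases (σ ⟨p, hp⟩) with h|h|h <;> rw [h] at h2 h3 ⊢ <;>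
      norm_num [toQ] at h3 h2
    · rcases hv p with h'|h'|h' <;> simp_all [lit, eval]
    · rcases hv p with h'|h'|h' <;> simp_all [lit, eval]
  · intro χ _; exact eval_nonneg hv χ

def restr (S : Finset ℕ) (v : ℕ → ℚ) : {x // x ∈ S} → Fin 3 :=
  fun p => if v p.1 = 0 then 0 else if v p.1 = 1 then 2 else 1

lemma toQ_restr {S : Finset ℕ} {v : ℕ → ℚ} (hv : SK v) (p : {x // x ∈ S}) :
    toQ (restr S v p) = v p.1 := by
  rcases hv p.1 with h|h|h <;> norm_num [restr, h, toQ]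

lemma valOf_restr {S : Finset ℕ} {v : ℕ → ℚ} (hv : SK v) {p : ℕ} (hp : p ∈ S) :
    valOf S (restr S v) p = v p := by
  rw [valOf_mem S _ hp]; exact toQ_restr hv ⟨p, hp⟩

end TSAux

namespace TSAux

lemma interp (Γ Δ : Finset Fm) (H : TSAntivalid Γ Δ) :
    ∃ φ : Fm, LPAntivalid Γ {φ} ∧ K3Antivalid {φ} Δ := by
  classical
  set S : Finset ℕ := (Γ ∪ Δ).sup vars with hSdef
  have hvΓ : ∀ γ ∈ Γ, ∀ p ∈ vars γ, p ∈ S :=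
    fun γ hγ p hp => Finset.mem_sup.2 ⟨γ, Finset.mem_union_left Δ hγ, hp⟩
  have hvΔ : ∀ δ ∈ Δ, ∀ p ∈ vars δ, p ∈ S :=
    fun δ hδ p hp => Finset.mem_sup.2 ⟨δ, Finset.mem_union_right Γ hδ, hp⟩
  obtain ⟨T, hTdef⟩ : ∃ t : Fm, t = bigDisj (((Finset.univ.filter
      (fun σ : {x // x ∈ S} → Fin 3 => ∀ δ ∈ Δ, eval (valOf S σ) δ = 1)).toList).map
      (Dform S)) := ⟨_, rfl⟩
  obtain ⟨Z, hZdef⟩ : ∃ t : Fm, t = bigDisj (((Finset.univ.filter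
      (fun σ : {x // x ∈ S} → Fin 3 => ∀ γ ∈ Γ, eval (valOf S σ) γ = 0)).toList).map
      (Dform S)) := ⟨_, rfl⟩
  have hagree : ∀ (v : ℕ → ℚ), SK v → ∀ χ : Fm, (∀ p ∈ vars χ, p ∈ S) →
      eval (valOf S (restr S v)) χ = eval v χ :=
    fun v hv χ hχ => eval_congr χ (fun p hp => valOf_restr hv (hχ p hp))
  refine ⟨.disj T (.conj .lam (.neg Z)), ?_, ?_⟩
  · -- LP-antivalid Γ ⇒ {φ}
    intro v hv hA
    refine ⟨_, Finset.mem_singleton_self _, ?_⟩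
    have hZ1 : eval v Z = 1 := by
      rw [hZdef]
      apply eval_bigDisj_eq_one (ψ := Dform S (restr S v))
      · refine List.mem_map.2 ⟨restr S v, Finset.mem_toList.2
          (Finset.mem_filter.2 ⟨Finset.mem_univ _, ?_⟩), rfl⟩
        intro γ hγ; rw [hagree v hv γ (hvΓ γ hγ)]; exact hA γ hγ
      · exact eval_Dform_one (fun p hp => (toQ_restr hv ⟨p, hp⟩).symm)
      · intro χ _; exact eval_le_one hv χ
    have hT0 : eval v T = 0 := by
      rw [hTdef]
      apply eval_bigDisj_eq_zero
      intro ψ hψ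
      obtain ⟨σ, hσ, rfl⟩ := List.mem_map.1 hψ
      have hσB : ∀ δ ∈ Δ, eval (valOf S σ) δ = 1 :=
        (Finset.mem_filter.1 (Finset.mem_toList.1 hσ)).2
      by_cases hc : ∀ p ∈ S, v p = 1/2 ∨ valOf S σ p = 1/2 ∨ v p = valOf S σ p
      · exfalso
        obtain ⟨u, hudef⟩ : ∃ u : ℕ → ℚ,
            u = fun p => if v p = 1/2 then valOf S σ p else v p := ⟨_, rfl⟩
        have hup : ∀ p, (v p = 1/2 → u p = valOf S σ p) ∧ (v p ≠ 1/2 → u p = v p) := by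
          intro p
          refine ⟨fun h => ?_, fun h => ?_⟩ <;> simp only [hudef]
          · rw [if_pos h]
          · rw [if_neg h]
        have hSKu : SK u := by
          intro p; by_cases h : v p = 1/2
          · rw [(hup p).1 h]; exact SK_valOf S σ p
          · rw [(hup p).2 h]; exact hv p
        have hAu : ∀ γ ∈ Γ, eval u γ = 0 := by
          intro γ hγ
          refine (eval_mono hv hSKu γ (fun p _ => ?_)).1 (hA γ hγ)
          by_cases h : v p = 1/2
          · exact Or.inl h
          · exact Or.inr ((hup p).2 h)
        have hBu : ∀ δ ∈ Δ, eval u δ = 1 := by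
          intro δ hδ
          refine (eval_mono (SK_valOf S σ) hSKu δ (fun p hp => ?_)).2 (hσB δ hδ)
          by_cases h : v p = 1/2
          · exact Or.inr ((hup p).1 h)
          · rcases hc p (hvΔ δ hδ p hp) with h'|h'|h'
            · exact absurd h' h
            · exact Or.inl h'
            · exact Or.inr (((hup p).2 h).trans h')
        obtain ⟨δ, hδ, hne⟩ := H u hSKu hAu
        exact hne (hBu δ hδ)
      · push_neg at hc
        obtain ⟨p, hpS, h1, h2, h3⟩ := hc
        exact eval_Dform_zero hv hpS h1
          (by rwa [valOf_mem S σ hpS] at h2) (by rwa [valOf_mem S σ hpS] at h3)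
    show eval v (Fm.disj T (Fm.conj Fm.lam (Fm.neg Z))) = 0
    simp only [eval]
    rw [hT0, hZ1]
    norm_num
  · -- K3-antivalid {φ} ⇒ Δ
    intro v hv hne
    by_contra hcon
    push_neg at hcon
    have hB : ∀ δ ∈ Δ, eval v δ = 1 := hcon
    have hT1 : eval v T = 1 := by
      rw [hTdef]
      apply eval_bigDisj_eq_one (ψ := Dform S (restr S v))
      · refine List.mem_map.2 ⟨restr S v, Finset.mem_toList.2
          (Finset.mem_filter.2 ⟨Finset.mem_univ _, ?_⟩), rfl⟩
        intro δ hδ; rw [hagree v hv δ (hvΔ δ hδ)]; exact hB δ hδ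
      · exact eval_Dform_one (fun p hp => (toQ_restr hv ⟨p, hp⟩).symm)
      · intro χ _; exact eval_le_one hv χ
    refine hne (Fm.disj T (Fm.conj Fm.lam (Fm.neg Z))) (Finset.mem_singleton_self _) ?_
    show eval v (Fm.disj T (Fm.conj Fm.lam (Fm.neg Z))) = 1
    simp only [eval]
    rw [hT1]
    exact max_eq_left (le_trans (min_le_left _ _) (by norm_num))

end TSAux


theorem TSminus_eq_relProd_LPminus_K3minus : TSminus = RelProd LPminus K3minus := by
  ext I
  obtain ⟨Γ, Δ⟩ := I
  simp only [TSminus, RelProd, LPminus, K3minus, Set.mem_setOf_eq]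
  constructor
  · exact TSAux.interp Γ Δ
  · rintro ⟨φ, h1, h2⟩ v hv hA
    obtain ⟨δ, hδ, h0⟩ := h1 v hv hA
    rw [Finset.mem_singleton] at hδ; subst hδ
    refine h2 v hv ?_
    intro γ hγ
    rw [Finset.mem_singleton] at hγ; subst hγ
    rw [h0]; norm_num
end
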